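/- arXiv:1706.03743 — 2 statements merged into one kernel-verified Lean document; each statement's English description precedes it below -/
import Mathlib

section
/- Let G be one-ended with N(r) as above, and let c : G × A^G → H be a continuous cocycle with continuity radius L (c(s,·) depends only on x|B(L,1) for s ∈ S). Define φ(g) := c(g,0⃗). For x ∈ A^G with finite support, write ‖x‖ := sup{|g| : x(g) ≠ 0}. Then for any two elements g, g' ∈ G with |g| > N(‖x‖+L) and |g'| > N(‖x‖+L), one has c(g,x)⁻¹φ(g) = c(g',x)⁻¹φ(g'). In particular b(x) := c(g,x)⁻¹φ(g) is well-defined independent of the choice of such g. -/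
/-- Word norm with respect to a generating set `S`. -/
noncomputable def wordNorm {G : Type*} [Group G] (S : Set G) (g : G) : ℕ :=
  sInf {n | ∃ w : List G, (∀ s ∈ w, s ∈ S) ∧ w.length = n ∧ w.prod = g}

/-- Left-invariant word metric. -/
noncomputable def wdist {G : Type*} [Group G] (S : Set G) (g h : G) : ℕ :=
  wordNorm S (g⁻¹ * h)

/-- Two elements are connected outside the ball of radius r if some path of
unit steps joins them with all vertices of word norm > r. -/
def WConnected {G : Type*} [Group G] (S : Set G) (r : ℕ) (g g' : G) : Prop :=
  ∃ (n : ℕ) (γ : ℕ → G), γ 0 = g ∧ γ n = g' ∧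
    (∀ j < n, wdist S (γ j) (γ (j + 1)) = 1) ∧
    (∀ j ≤ n, r < wordNorm S (γ j))

/-- g lies in an unbounded connected component of the Cayley graph minus the
ball of radius r. -/
def InUnbounded {G : Type*} [Group G] (S : Set G) (r : ℕ) (g : G) : Prop :=
  ∀ M : ℕ, ∃ g' : G, WConnected S r g g' ∧ M < wordNorm S g'

/-- The norm of the support of a configuration: sup of |g| over g with x(g) ≠ 0. -/
noncomputable def suppNorm {G : Type*} [Group G] {A : Type*} (S : Set G) (a0 : A)
    (x : G → A) : ℕ :=
  sSup {n | ∃ g : G, x g ≠ a0 ∧ wordNorm S g = n}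

section aux
variable {G : Type*} [Group G] {S : Set G}

lemma word_inv_mem {w : List G} (hsym : ∀ s ∈ S, s⁻¹ ∈ S) (hw : ∀ s ∈ w, s ∈ S) :
    ∀ s ∈ (w.map (·⁻¹)).reverse, s ∈ S := by
  intro s hs
  simp only [List.mem_reverse, List.mem_map] at hs
  obtain ⟨t, ht, rfl⟩ := hs
  exact hsym t (hw t ht)

lemma exists_word (hsym : ∀ s ∈ S, s⁻¹ ∈ S) (hgen : Subgroup.closure S = ⊤) (g : G) :
    ∃ w : List G, (∀ s ∈ w, s ∈ S) ∧ w.prod = g := by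
  have hg : g ∈ Subgroup.closure S := by rw [hgen]; trivial
  induction hg using Subgroup.closure_induction with
  | mem s hs => exact ⟨[s], by simp [hs]⟩
  | one => exact ⟨[], by simp⟩
  | mul a b _ _ ha hb =>
    obtain ⟨w1, h1, p1⟩ := ha
    obtain ⟨w2, h2, p2⟩ := hb
    refine ⟨w1 ++ w2, ?_, by simp [p1, p2]⟩
    intro s hs; rcases List.mem_append.1 hs with h | h
    exacts [h1 s h, h2 s h]
  | inv a _ ha =>
    obtain ⟨w, h1, p1⟩ := ha
    exact ⟨(w.map (·⁻¹)).reverse, word_inv_mem hsym h1,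
      by rw [← p1, List.prod_inv_reverse]⟩

lemma wordNorm_spec (hsym : ∀ s ∈ S, s⁻¹ ∈ S) (hgen : Subgroup.closure S = ⊤) (g : G) :
    ∃ w : List G, (∀ s ∈ w, s ∈ S) ∧ w.length = wordNorm S g ∧ w.prod = g := by
  have hne : {n | ∃ w : List G, (∀ s ∈ w, s ∈ S) ∧ w.length = n ∧ w.prod = g}.Nonempty := by
    obtain ⟨w, hw, hp⟩ := exists_word hsym hgen g
    exact ⟨w.length, w, hw, rfl, hp⟩
  exact Nat.sInf_mem hne

lemma wordNorm_le {g : G} {w : List G} (hw : ∀ s ∈ w, s ∈ S) (hp : w.prod = g) :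
    wordNorm S g ≤ w.length :=
  Nat.sInf_le ⟨w, hw, rfl, hp⟩

lemma wordNorm_inv (hsym : ∀ s ∈ S, s⁻¹ ∈ S) (hgen : Subgroup.closure S = ⊤) (g : G) :
    wordNorm S g⁻¹ = wordNorm S g := by
  have key : ∀ h : G, wordNorm S h⁻¹ ≤ wordNorm S h := by
    intro h
    obtain ⟨w, hw, hl, hp⟩ := wordNorm_spec hsym hgen h
    calc wordNorm S h⁻¹ ≤ ((w.map (·⁻¹)).reverse).length :=
          wordNorm_le (word_inv_mem hsym hw) (by rw [← hp, List.prod_inv_reverse])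
      _ = wordNorm S h := by simp [hl]
  exact le_antisymm (key g) (by simpa using key g⁻¹)

lemma wordNorm_mul_le (hsym : ∀ s ∈ S, s⁻¹ ∈ S) (hgen : Subgroup.closure S = ⊤) (a b : G) :
    wordNorm S (a * b) ≤ wordNorm S a + wordNorm S b := by
  obtain ⟨w1, hw1, hl1, hp1⟩ := wordNorm_spec hsym hgen a
  obtain ⟨w2, hw2, hl2, hp2⟩ := wordNorm_spec hsym hgen b
  have : wordNorm S (a * b) ≤ (w1 ++ w2).length := by
    refine wordNorm_le ?_ (by simp [hp1, hp2])
    intro s hs; rcases List.mem_append.1 hs with h | h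
    exacts [hw1 s h, hw2 s h]
  simpa [hl1, hl2] using this

lemma mem_of_wordNorm_one (hsym : ∀ s ∈ S, s⁻¹ ∈ S) (hgen : Subgroup.closure S = ⊤) {g : G}
    (h : wordNorm S g = 1) : g ∈ S := by
  obtain ⟨w, hw, hl, hp⟩ := wordNorm_spec hsym hgen g
  rw [h] at hl
  match w, hl with
  | [s], _ => rw [← hp]; simpa using hw s (by simp)

end aux

/-- b(x) := c(g,x)⁻¹φ(g) is independent of the choice of g with
|g| > N(‖x‖+L), where φ(g) := c(g,0⃗). -/
theorem transfer_independent_of_basepoint {G : Type*} [Group G] [Infinite G]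
    {A : Type*} [Finite A] (a0 : A) {H : Type*} [Group H] (S : Set G)
    (hfin : S.Finite) (hsym : ∀ s ∈ S, s⁻¹ ∈ S) (hgen : Subgroup.closure S = ⊤)
    (N : ℕ → ℕ)
    (hN : ∀ (r : ℕ) (g g' : G), N r < wordNorm S g → N r < wordNorm S g' →
      WConnected S r g g')
    (c : G → (G → A) → H)
    (hcoc : ∀ (g h : G) (x : G → A),
      c (g * h) x = c g (fun k => x (h⁻¹ * k)) * c h x)
    (L : ℕ)
    (hL : ∀ s ∈ S, ∀ x y : G → A,
      (∀ g : G, wordNorm S g ≤ L → x g = y g) → c s x = c s y)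
    (x : G → A) (hx : {g : G | x g ≠ a0}.Finite) (g g' : G)
    (hg : N (suppNorm S a0 x + L) < wordNorm S g)
    (hg' : N (suppNorm S a0 x + L) < wordNorm S g') :
    (c g x)⁻¹ * c g (fun _ => a0) = (c g' x)⁻¹ * c g' (fun _ => a0) := by
  set r : ℕ := suppNorm S a0 x + L with hr
  -- support bound
  have hsupp : ∀ h : G, x h ≠ a0 → wordNorm S h ≤ suppNorm S a0 x := by
    intro h hh
    have hbdd : BddAbove {n | ∃ g : G, x g ≠ a0 ∧ wordNorm S g = n} := by
      have : {n | ∃ g : G, x g ≠ a0 ∧ wordNorm S g = n} = wordNorm S '' {g | x g ≠ a0} := by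
        ext n; simp [Set.mem_image, eq_comm]
      rw [this]
      exact (hx.image _).bddAbove
    exact le_csSup hbdd ⟨h, hh, rfl⟩
  -- step lemma : c s (h • x) = c s 0 when |h| > r
  have hfar : ∀ s ∈ S, ∀ h : G, r < wordNorm S h →
      c s (fun k => x (h⁻¹ * k)) = c s (fun _ => a0) := by
    intro s hs h hh
    apply hL s hs
    intro k hk
    by_contra hne
    have h1 : wordNorm S (h⁻¹ * k) ≤ suppNorm S a0 x := hsupp _ hne
    have h2 : wordNorm S h ≤ wordNorm S k + wordNorm S (h⁻¹ * k) := by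
      calc wordNorm S h = wordNorm S (k * (h⁻¹ * k)⁻¹) := by group
        _ ≤ wordNorm S k + wordNorm S (h⁻¹ * k)⁻¹ := wordNorm_mul_le hsym hgen _ _
        _ = wordNorm S k + wordNorm S (h⁻¹ * k) := by rw [wordNorm_inv hsym hgen]
    omega
  -- one step invariance
  have hstep : ∀ s ∈ S, ∀ h : G, r < wordNorm S h →
      (c (s * h) x)⁻¹ * c (s * h) (fun _ => a0)
        = (c h x)⁻¹ * c h (fun _ => a0) := by
    intro s hs h hh
    have e1 : c (s * h) x = c s (fun k => x (h⁻¹ * k)) * c h x := hcoc s h x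
    have e2 : c (s * h) (fun _ => a0)
        = c s (fun _ => a0) * c h (fun _ => a0) := hcoc s h (fun _ => a0)
    rw [e1, e2, hfar s hs h hh]
    group
  -- path between g⁻¹ and g'⁻¹
  obtain ⟨n, γ, h0, hn, hadj, hout⟩ := hN r g⁻¹ g'⁻¹
    (by rwa [wordNorm_inv hsym hgen]) (by rwa [wordNorm_inv hsym hgen])
  -- induct along the path
  have key : ∀ j ≤ n, (c (γ j)⁻¹ x)⁻¹ * c (γ j)⁻¹ (fun _ => a0)
      = (c g x)⁻¹ * c g (fun _ => a0) := by
    intro j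
    induction j with
    | zero => intro _; rw [h0]; simp
    | succ j ih =>
      intro hjn
      have hj : j ≤ n := by omega
      have hs : (γ j)⁻¹ * γ (j + 1) ∈ S :=
        mem_of_wordNorm_one hsym hgen (hadj j (by omega))
      have hseq : (γ (j+1))⁻¹ = ((γ j)⁻¹ * γ (j+1))⁻¹ * (γ j)⁻¹ := by group
      rw [hseq]
      rw [hstep _ (hsym _ hs) _ (by rw [wordNorm_inv hsym hgen]; exact hout j hj)]
      exact ih hj
  have k1 := key n le_rfl
  rw [hn] at k1
  simpa using k1.symm
end

section
/- With the setup above (one-ended G, continuous cocycle c with radius L, φ(g) := c(g,0⃗), and b(x) := c(g_x,x)⁻¹φ(g_x) for any g_x with |g_x| > N(‖x‖+L)): for all g ∈ G and all finitely supported x ∈ A^G, c(g,x) = b(g·x) · φ(g) · b(x)⁻¹. -/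
namespace CobAux

variable {G : Type*} [Group G] {S : Set G}

lemma exists_word (hsym : ∀ s ∈ S, s⁻¹ ∈ S) (hgen : Subgroup.closure S = ⊤) (g : G) :
    ∃ w : List G, (∀ s ∈ w, s ∈ S) ∧ w.prod = g := by
  have hg : g ∈ (Subgroup.closure S).toSubmonoid := by
    rw [hgen]; trivial
  rw [Subgroup.closure_toSubmonoid] at hg
  have hg2 : g ∈ Submonoid.closure S := by
    refine Submonoid.closure_mono ?_ hg
    rintro s (hs | hs)
    · exact hs
    · simpa using hsym _ hs
  exact Submonoid.exists_list_of_mem_closure hg2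

lemma wordSet_nonempty (hsym : ∀ s ∈ S, s⁻¹ ∈ S) (hgen : Subgroup.closure S = ⊤) (g : G) :
    {n | ∃ w : List G, (∀ s ∈ w, s ∈ S) ∧ w.length = n ∧ w.prod = g}.Nonempty := by
  obtain ⟨w, hw, hp⟩ := exists_word hsym hgen g
  exact ⟨w.length, w, hw, rfl, hp⟩

lemma exists_word_norm (hsym : ∀ s ∈ S, s⁻¹ ∈ S) (hgen : Subgroup.closure S = ⊤) (g : G) :
    ∃ w : List G, (∀ s ∈ w, s ∈ S) ∧ w.length = wordNorm S g ∧ w.prod = g :=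
  Nat.sInf_mem (wordSet_nonempty hsym hgen g)

lemma wordNorm_le (w : List G) (hw : ∀ s ∈ w, s ∈ S) : wordNorm S w.prod ≤ w.length :=
  Nat.sInf_le ⟨w, hw, rfl, rfl⟩

lemma wordNorm_mul_le (hsym : ∀ s ∈ S, s⁻¹ ∈ S) (hgen : Subgroup.closure S = ⊤) (a b : G) :
    wordNorm S (a * b) ≤ wordNorm S a + wordNorm S b := by
  obtain ⟨w1, hw1, hl1, hp1⟩ := exists_word_norm hsym hgen a
  obtain ⟨w2, hw2, hl2, hp2⟩ := exists_word_norm hsym hgen b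
  have := wordNorm_le (S := S) (w1 ++ w2) (by
    intro s hs; rcases List.mem_append.mp hs with h | h
    · exact hw1 s h
    · exact hw2 s h)
  simpa [hp1, hp2, hl1, hl2] using this

lemma wordNorm_inv_le (hsym : ∀ s ∈ S, s⁻¹ ∈ S) (hgen : Subgroup.closure S = ⊤) (g : G) :
    wordNorm S g⁻¹ ≤ wordNorm S g := by
  obtain ⟨w, hw, hl, hp⟩ := exists_word_norm hsym hgen g
  have hmem : ∀ s ∈ (w.map fun t => t⁻¹).reverse, s ∈ S := by
    intro s hs
    rw [List.mem_reverse, List.mem_map] at hs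
    obtain ⟨t, ht, rfl⟩ := hs
    exact hsym _ (hw t ht)
  have := wordNorm_le (S := S) (w.map fun t => t⁻¹).reverse hmem
  rw [← List.prod_inv_reverse, hp] at this
  simpa [hl] using this

lemma wordNorm_inv (hsym : ∀ s ∈ S, s⁻¹ ∈ S) (hgen : Subgroup.closure S = ⊤) (g : G) :
    wordNorm S g⁻¹ = wordNorm S g :=
  le_antisymm (wordNorm_inv_le hsym hgen g)
    (by simpa using wordNorm_inv_le hsym hgen g⁻¹)

lemma mem_of_wordNorm_one (hsym : ∀ s ∈ S, s⁻¹ ∈ S) (hgen : Subgroup.closure S = ⊤) {g : G}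
    (hg : wordNorm S g = 1) : g ∈ S := by
  obtain ⟨w, hw, hl, hp⟩ := exists_word_norm hsym hgen g
  rw [hg] at hl
  match w, hl with
  | [s], _ =>
    have : s = g := by simpa using hp
    exact this ▸ hw s (by simp)

lemma ball_finite (hfin : S.Finite) (hsym : ∀ s ∈ S, s⁻¹ ∈ S)
    (hgen : Subgroup.closure S = ⊤) : ∀ M : ℕ, {g : G | wordNorm S g ≤ M}.Finite
  | 0 => by
    refine (Set.finite_singleton (1 : G)).subset ?_
    intro g hg
    have hg' : wordNorm S g ≤ 0 := hg
    obtain ⟨w, hw, hl, hp⟩ := exists_word_norm hsym hgen g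
    have : w.length = 0 := by omega
    have : w = [] := List.length_eq_zero_iff.mp this
    simp only [this, List.prod_nil] at hp
    simp [← hp]
  | (M + 1) => by
    have IH := ball_finite hfin hsym hgen M
    refine Set.Finite.subset (IH.union (hfin.biUnion fun s _ => IH.image fun t => s * t)) ?_
    intro g hg
    have hg' : wordNorm S g ≤ M + 1 := hg
    obtain ⟨w, hw, hl, hp⟩ := exists_word_norm hsym hgen g
    match w, hw, hl, hp with
    | [], hw, hl, hp =>
      left
      simp only [List.prod_nil] at hp
      have h0 : wordNorm S g = 0 := by
        have := wordNorm_le (S := S) [] (by simp)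
        simpa [hp] using this
      show wordNorm S g ≤ M
      omega
    | (s :: t), hw, hl, hp =>
      right
      have hs : s ∈ S := hw s (by simp)
      have htmem : ∀ u ∈ t, u ∈ S := fun u hu => hw u (by simp [hu])
      have ht : wordNorm S t.prod ≤ M := by
        have h1 := wordNorm_le (S := S) t htmem
        have h2 : t.length ≤ M := by
          have h3 : (s :: t).length = wordNorm S g := hl
          simp only [List.length_cons] at h3
          omega
        omega
      refine Set.mem_biUnion hs ⟨t.prod, ht, ?_⟩
      simpa using hp

end CobAux

namespace CobAux

variable {G : Type*} [Group G] {S : Set G}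

lemma exists_far [Infinite G] (hfin : S.Finite) (hsym : ∀ s ∈ S, s⁻¹ ∈ S)
    (hgen : Subgroup.closure S = ⊤) (g : G) (M₁ M₂ : ℕ) :
    ∃ h : G, M₁ < wordNorm S h ∧ M₂ < wordNorm S (h * g) := by
  have F : ({h : G | wordNorm S h ≤ M₁} ∪
      (fun t => t * g⁻¹) '' {h : G | wordNorm S h ≤ M₂}).Finite :=
    (ball_finite hfin hsym hgen M₁).union ((ball_finite hfin hsym hgen M₂).image _)
  obtain ⟨h, hh⟩ := F.infinite_compl.nonempty
  simp only [Set.mem_compl_iff, Set.mem_union, Set.mem_image, Set.mem_setOf_eq, not_or,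
    not_exists, not_and] at hh
  refine ⟨h, by omega, ?_⟩
  by_contra hcon
  push_neg at hcon
  exact hh.2 (h * g) hcon (by group)

variable {A : Type*} (a0 : A)

lemma le_suppNorm (S : Set G) {x : G → A} (hx : {g : G | x g ≠ a0}.Finite) {k : G}
    (hk : x k ≠ a0) : wordNorm S k ≤ suppNorm S a0 x := by
  have heq : {n | ∃ g : G, x g ≠ a0 ∧ wordNorm S g = n} = wordNorm S '' {g | x g ≠ a0} := by
    ext n; simp [Set.mem_image, Set.mem_setOf_eq]
  have hfin : {n | ∃ g : G, x g ≠ a0 ∧ wordNorm S g = n}.Finite := heq ▸ hx.image _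
  exact le_csSup hfin.bddAbove ⟨k, hk, rfl⟩

lemma vanish (hsym : ∀ s ∈ S, s⁻¹ ∈ S) (hgen : Subgroup.closure S = ⊤)
    {x : G → A} (hx : {g : G | x g ≠ a0}.Finite) {L : ℕ} {q k : G}
    (hq : suppNorm S a0 x + L < wordNorm S q) (hk : wordNorm S k ≤ L) :
    x (q⁻¹ * k) = a0 := by
  by_contra hcon
  have h1 : wordNorm S (q⁻¹ * k) ≤ suppNorm S a0 x := le_suppNorm a0 S hx hcon
  have h2 : wordNorm S q⁻¹ ≤ wordNorm S (q⁻¹ * k) + wordNorm S k⁻¹ := by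
    have := wordNorm_mul_le hsym hgen (q⁻¹ * k) k⁻¹
    simpa using this
  rw [wordNorm_inv hsym hgen] at h2
  rw [wordNorm_inv hsym hgen] at h2
  omega

variable {H : Type*} [Group H] (c : G → (G → A) → H)

lemma phi_mul (hcoc : ∀ (g h : G) (x : G → A),
      c (g * h) x = c g (fun k => x (h⁻¹ * k)) * c h x) (a b : G) :
    c (a * b) (fun _ => a0) = c a (fun _ => a0) * c b (fun _ => a0) :=
  hcoc a b (fun _ => a0)

lemma step_lemma (hsym : ∀ s ∈ S, s⁻¹ ∈ S) (hgen : Subgroup.closure S = ⊤)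
    (hcoc : ∀ (g h : G) (x : G → A),
      c (g * h) x = c g (fun k => x (h⁻¹ * k)) * c h x)
    {L : ℕ}
    (hL : ∀ s ∈ S, ∀ x y : G → A,
      (∀ g : G, wordNorm S g ≤ L → x g = y g) → c s x = c s y)
    {x : G → A} (hx : {g : G | x g ≠ a0}.Finite) {s q : G} (hs : s ∈ S)
    (hq : suppNorm S a0 x + L < wordNorm S q) :
    c (s * q) x = c s (fun _ => a0) * c q x := by
  rw [hcoc s q x]
  congr 1
  exact hL s hs _ _ fun k hk => vanish a0 hsym hgen hx hq hk

lemma path_lemma (hsym : ∀ s ∈ S, s⁻¹ ∈ S) (hgen : Subgroup.closure S = ⊤)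
    (hcoc : ∀ (g h : G) (x : G → A),
      c (g * h) x = c g (fun k => x (h⁻¹ * k)) * c h x)
    {L : ℕ}
    (hL : ∀ s ∈ S, ∀ x y : G → A,
      (∀ g : G, wordNorm S g ≤ L → x g = y g) → c s x = c s y)
    {x : G → A} (hx : {g : G | x g ≠ a0}.Finite) :
    ∀ (n : ℕ) (γ : ℕ → G), (∀ j < n, wdist S (γ j) (γ (j + 1)) = 1) →
      (∀ j ≤ n, suppNorm S a0 x + L < wordNorm S (γ j)) →
      (c (γ n)⁻¹ x)⁻¹ * c (γ n)⁻¹ (fun _ => a0) =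
        (c (γ 0)⁻¹ x)⁻¹ * c (γ 0)⁻¹ (fun _ => a0)
  | 0, γ, _, _ => rfl
  | (n + 1), γ, hstep, hball => by
    have IH := path_lemma hsym hgen hcoc hL hx n γ
      (fun j hj => hstep j (by omega)) (fun j hj => hball j (by omega))
    rw [← IH]
    set s : G := (γ n)⁻¹ * γ (n + 1) with hs_def
    have hsS : s ∈ S := mem_of_wordNorm_one hsym hgen (hstep n (by omega))
    have hinvS : s⁻¹ ∈ S := hsym s hsS
    have hdecomp : (γ (n + 1))⁻¹ = s⁻¹ * (γ n)⁻¹ := by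
      rw [hs_def]; group
    have hnorm : suppNorm S a0 x + L < wordNorm S (γ n)⁻¹ := by
      rw [wordNorm_inv hsym hgen]; exact hball n (by omega)
    rw [hdecomp, step_lemma a0 c hsym hgen hcoc hL hx hinvS hnorm,
      phi_mul a0 c hcoc s⁻¹ (γ n)⁻¹]
    group

lemma indep (hsym : ∀ s ∈ S, s⁻¹ ∈ S) (hgen : Subgroup.closure S = ⊤)
    {N : ℕ → ℕ}
    (hN : ∀ (r : ℕ) (g g' : G), N r < wordNorm S g → N r < wordNorm S g' →
      WConnected S r g g')
    (hcoc : ∀ (g h : G) (x : G → A),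
      c (g * h) x = c g (fun k => x (h⁻¹ * k)) * c h x)
    {L : ℕ}
    (hL : ∀ s ∈ S, ∀ x y : G → A,
      (∀ g : G, wordNorm S g ≤ L → x g = y g) → c s x = c s y)
    {x : G → A} (hx : {g : G | x g ≠ a0}.Finite) {h₁ h₂ : G}
    (hh₁ : N (suppNorm S a0 x + L) < wordNorm S h₁)
    (hh₂ : N (suppNorm S a0 x + L) < wordNorm S h₂) :
    (c h₁ x)⁻¹ * c h₁ (fun _ => a0) = (c h₂ x)⁻¹ * c h₂ (fun _ => a0) := by
  obtain ⟨n, γ, hγ0, hγn, hstep, hball⟩ := hN (suppNorm S a0 x + L) h₂⁻¹ h₁⁻¹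
    (by rw [wordNorm_inv hsym hgen]; exact hh₂)
    (by rw [wordNorm_inv hsym hgen]; exact hh₁)
  have := path_lemma a0 c hsym hgen hcoc hL hx n γ hstep hball
  rw [hγ0, hγn] at this
  simpa using this

end CobAux

/-- On finitely supported configurations, c is a coboundary relative to
φ(g) := c(g,0⃗) with transfer function b(x) := c(h,x)⁻¹φ(h) for any h of
norm > N(‖x‖+L). -/
theorem coboundary_on_finitely_supported {G : Type*} [Group G] [Infinite G]
    {A : Type*} [Finite A] (a0 : A) {H : Type*} [Group H] (S : Set G)
    (hfin : S.Finite) (hsym : ∀ s ∈ S, s⁻¹ ∈ S) (hgen : Subgroup.closure S = ⊤)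
    (N : ℕ → ℕ)
    (hN : ∀ (r : ℕ) (g g' : G), N r < wordNorm S g → N r < wordNorm S g' →
      WConnected S r g g')
    (c : G → (G → A) → H)
    (hcoc : ∀ (g h : G) (x : G → A),
      c (g * h) x = c g (fun k => x (h⁻¹ * k)) * c h x)
    (L : ℕ)
    (hL : ∀ s ∈ S, ∀ x y : G → A,
      (∀ g : G, wordNorm S g ≤ L → x g = y g) → c s x = c s y)
    (x : G → A) (hx : {g : G | x g ≠ a0}.Finite) (g : G) (h h' : G)
    (hh : N (suppNorm S a0 (fun k => x (g⁻¹ * k)) + L) < wordNorm S h)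
    (hh' : N (suppNorm S a0 x + L) < wordNorm S h') :
    c g x =
      ((c h (fun k => x (g⁻¹ * k)))⁻¹ * c h (fun _ => a0)) * c g (fun _ => a0) *
        ((c h' x)⁻¹ * c h' (fun _ => a0))⁻¹ := by
  classical
  set x' : G → A := fun k => x (g⁻¹ * k) with hx'_def
  have hx' : {k : G | x' k ≠ a0}.Finite := by
    have himg : {k : G | x' k ≠ a0} = (fun k => g * k) '' {k : G | x k ≠ a0} := by
      ext k
      simp only [Set.mem_setOf_eq, Set.mem_image, hx'_def]
      constructor
      · intro hk; exact ⟨g⁻¹ * k, hk, by group⟩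
      · rintro ⟨m, hm, rfl⟩; simpa using hm
    rw [himg]; exact hx.image _
  obtain ⟨h₀, hh₀1, hh₀2⟩ := CobAux.exists_far hfin hsym hgen g
    (N (suppNorm S a0 x' + L)) (N (suppNorm S a0 x + L))
  have A1 := CobAux.indep a0 c hsym hgen hN hcoc hL hx' hh hh₀1
  have A2 := CobAux.indep a0 c hsym hgen hN hcoc hL hx hh₀2 hh'
  have hc : c (h₀ * g) x = c h₀ x' * c g x := hcoc h₀ g x
  have hphi : c (h₀ * g) (fun _ => a0) = c h₀ (fun _ => a0) * c g (fun _ => a0) :=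
    CobAux.phi_mul a0 c hcoc h₀ g
  have key : (c h' x)⁻¹ * c h' (fun _ => a0) =
      (c g x)⁻¹ * (c h₀ x')⁻¹ * c h₀ (fun _ => a0) * c g (fun _ => a0) := by
    rw [← A2, hc, hphi]; group
  rw [A1, key]; group
end
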